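/- Let V be a discriminator variety of finite similarity type that is generated by its finite members as a variety, and assume that V has a Boolean algebra reduct: the language of V contains symbols for the Boolean operations ∧, ∨, ¬, 0, 1 and every member of V is a Boolean algebra under these operations. Then every finitely generated V-free algebra is atomic as a Boolean algebra: every nonzero element has an atom below it. -/

import Mathlib

/-!
Write `b ≠ ⊥` as a term `t` at the free generators. Since the variety is generated by its finite
members, and a finite algebra is a subdirect product of finite subdirectly irreducible ones, `t`
is nonzero at some valuation `w` in a finite subdirectly irreducible member `N`; let `g : F → N`
extend `w`. The language and `N` being finite, the equations holding at `w` follow from finitely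
many of them, and the discriminator turns these into a term that is `⊤` where they hold and `⊥`
elsewhere in every subdirectly irreducible member. Its value `d` at the generators satisfies
`g d = ⊤`, and below `d` an element of `F` is determined by its image under `g`. So if `g y` is
minimal among the nonzero elements of the finite range of `g` below `g b`, then `d ⊓ y ⊓ b` is an
atom below `b`.
-/

open FirstOrder FirstOrder.Language FirstOrder.Language.Structure

/-- `M` satisfies the set of equations `E` (each equation being a pair of
terms in countably many variables). The variety `V` axiomatized by `E` is the
class of all structures satisfying `ModelsEqs L E`. -/
def ModelsEqs (L : Language) (E : Set (L.Term ℕ × L.Term ℕ))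
    (M : Type*) [L.Structure M] : Prop :=
  ∀ e ∈ E, ∀ v : ℕ → M, e.1.realize v = e.2.realize v

/-- A congruence of an `L`-structure: an equivalence relation compatible with
all the operations. -/
def IsCongruence (L : Language) (M : Type*) [L.Structure M]
    (c : M → M → Prop) : Prop :=
  Equivalence c ∧ ∀ (n : ℕ) (f : L.Functions n) (a b : Fin n → M),
    (∀ i, c (a i) (b i)) → c (funMap f a) (funMap f b)

/-- A structure is subdirectly irreducible if among its congruences distinct
from the identity relation there is a least one. -/
def SubdirectlyIrreducible (L : Language) (M : Type*) [L.Structure M] : Prop :=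
  ∃ c : M → M → Prop, IsCongruence L M c ∧ c ≠ Eq ∧
    ∀ d : M → M → Prop, IsCongruence L M d → d ≠ Eq → ∀ x y, c x y → d x y

/-- The Boolean algebra operations of `M` are the interpretations of the
designated function symbols `fmeet`, `fjoin`, `fcompl`, `fbot`, `ftop`. -/
def BoolOpsMatch {L : Language} (fmeet fjoin : L.Functions 2)
    (fcompl : L.Functions 1) (fbot ftop : L.Functions 0)
    (M : Type*) [L.Structure M] [BooleanAlgebra M] : Prop :=
  (∀ a b : M, funMap fmeet ![a, b] = a ⊓ b) ∧
  (∀ a b : M, funMap fjoin ![a, b] = a ⊔ b) ∧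
  (∀ a : M, funMap fcompl ![a] = aᶜ) ∧
  funMap fbot ![] = (⊥ : M) ∧
  funMap ftop ![] = (⊤ : M)

def IsDiscriminator {L : Language} (σ : L.Term (Fin 4)) (M : Type*) [L.Structure M] : Prop :=
  ∀ x y a b : M, (x = y → σ.realize ![x, y, a, b] = a) ∧ (x ≠ y → σ.realize ![x, y, a, b] = b)

def IsFree {L : Language} (E : Set (L.Term ℕ × L.Term ℕ)) {F : Type u} [L.Structure F]
    {X : Type*} (ι : X → F) : Prop :=
  ∀ (A : Type u) [L.Structure A], ModelsEqs L E A →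
    ∀ f : X → A, ∃! g : F →[L] A, ∀ x : X, g (ι x) = f x

theorem exists_isAtom_le_of_map_ne_bot {F N : Type*} [SemilatticeInf F] [OrderBot F]
    [SemilatticeInf N] [BoundedOrder N] {g : F → N} (map_inf : ∀ x y, g (x ⊓ y) = g x ⊓ g y)
    (map_bot : g ⊥ = ⊥) (hfin : (Set.range g).Finite) {d : F} (hd : g d = ⊤)
    (hdg : ∀ y z, g y = g z → d ⊓ y = d ⊓ z) {b : F} (hb : g b ≠ ⊥) :
    ∃ a, IsAtom a ∧ a ≤ b := by
  obtain ⟨_, ⟨⟨y, rfl⟩, hy, hyb⟩, hymin⟩ :=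
    (hfin.subset fun _ h => h.1).exists_minimal
      (s := {α | α ∈ Set.range g ∧ α ≠ ⊥ ∧ α ≤ g b}) ⟨g b, ⟨b, rfl⟩, hb, le_rfl⟩
  set a := d ⊓ (y ⊓ b)
  have hga : g a = g y := by rw [map_inf, map_inf, hd, top_inf_eq, inf_eq_left.2 hyb]
  have hda : ∀ z ≤ a, d ⊓ z = z := fun z hz => inf_eq_right.2 (hz.trans inf_le_left)
  refine ⟨a, ⟨fun ha => hy (by rw [← hga, ha, map_bot]), fun z hz => ?_⟩,
    inf_le_right.trans inf_le_right⟩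
  have hgz : g z ≤ g y := by rw [← hga, ← inf_eq_left.2 hz.le, map_inf]; exact inf_le_right
  by_cases hz0 : g z = ⊥
  · rw [← hda z hz.le, hdg z ⊥ (hz0.trans map_bot.symm), inf_bot_eq]
  · have hgza : g z = g a := hga ▸ le_antisymm hgz (hymin ⟨⟨z, rfl⟩, hz0, hgz.trans hyb⟩ hgz)
    exact absurd (by rw [← hda z hz.le, ← hda a le_rfl, hdg z a hgza]) hz.ne

section Language

variable {L : Language}

namespace BoolOpsMatch

variable {fmeet fjoin : L.Functions 2} {fcompl : L.Functions 1} {fbot ftop : L.Functions 0}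
  {M N : Type*} [L.Structure M] [BooleanAlgebra M] [L.Structure N] [BooleanAlgebra N]
  {α : Type*}

theorem realize_meet (h : BoolOpsMatch fmeet fjoin fcompl fbot ftop M) (s t : L.Term α)
    (v : α → M) : (fmeet.apply₂ s t).realize v = s.realize v ⊓ t.realize v := by
  rw [Term.realize_functions_apply₂, h.1]

theorem realize_bot (h : BoolOpsMatch fmeet fjoin fcompl fbot ftop M) (v : α → M) :
    (Constants.term fbot : L.Term α).realize v = ⊥ := by
  rw [Term.realize_constants, ← funMap_eq_coe_constants (x := ![]), h.2.2.2.1]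

theorem realize_top (h : BoolOpsMatch fmeet fjoin fcompl fbot ftop M) (v : α → M) :
    (Constants.term ftop : L.Term α).realize v = ⊤ := by
  rw [Term.realize_constants, ← funMap_eq_coe_constants (x := ![]), h.2.2.2.2]

theorem map_inf (hM : BoolOpsMatch fmeet fjoin fcompl fbot ftop M)
    (hN : BoolOpsMatch fmeet fjoin fcompl fbot ftop N) (g : M →[L] N) (x y : M) :
    g (x ⊓ y) = g x ⊓ g y := by
  rw [← hM.1, HomClass.map_fun, ← hN.1]
  congr 1
  ext i
  fin_cases i <;> rfl

theorem map_bot (hM : BoolOpsMatch fmeet fjoin fcompl fbot ftop M)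
    (hN : BoolOpsMatch fmeet fjoin fcompl fbot ftop N) (g : M →[L] N) : g ⊥ = ⊥ := by
  rw [← hM.2.2.2.1, HomClass.map_fun, ← hN.2.2.2.1]
  congr 1
  ext i
  exact i.elim0

theorem realize_subst_top_bot (h : BoolOpsMatch fmeet fjoin fcompl fbot ftop M)
    (σ : L.Term (Fin 4)) (p q : L.Term α) (v : α → M) :
    (σ.subst ![p, q, Constants.term ftop, Constants.term fbot]).realize v =
      σ.realize ![p.realize v, q.realize v, ⊤, ⊥] := by
  rw [Term.realize_subst]
  congr 1
  ext i
  fin_cases i <;> simp [h.realize_top, h.realize_bot]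

end BoolOpsMatch

namespace ModelsEqs

variable {E : Set (L.Term ℕ × L.Term ℕ)} {M N : Type*} [L.Structure M] [L.Structure N]

theorem of_injective (h : ModelsEqs L E N) (g : M →[L] N) (hg : Function.Injective g) :
    ModelsEqs L E M := fun e he v =>
  hg <| by rw [← HomClass.realize_term, ← HomClass.realize_term, h e he]

theorem of_surjective (h : ModelsEqs L E M) (g : M →[L] N) (hg : Function.Surjective g) :
    ModelsEqs L E N := fun e he v => by
  obtain ⟨u, rfl⟩ := hg.comp_left v
  rw [HomClass.realize_term, HomClass.realize_term, h e he]

end ModelsEqs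

section Congruence

variable {M : Type u} {N : Type*} [L.Structure M] [L.Structure N]

theorem isCongruence_eq : IsCongruence L M Eq :=
  ⟨eq_equivalence, fun _ f _ _ h => congrArg (funMap f) (funext h)⟩

theorem IsCongruence.comap {d : N → N → Prop} (hd : IsCongruence L N d) (g : M →[L] N) :
    IsCongruence L M fun x y => d (g x) (g y) :=
  ⟨⟨fun _ => hd.1.refl _, hd.1.symm, hd.1.trans⟩, fun n f a b h => by
    simp only [HomClass.map_fun]
    exact hd.2 n f _ _ h⟩

theorem IsCongruence.exists_surjective_hom {c : M → M → Prop}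
    (hc : IsCongruence L M c) :
    ∃ (Q : Type u) (_ : L.Structure Q) (π : M →[L] Q),
      Function.Surjective π ∧ ∀ x y, π x = π y ↔ c x y := by
  let s : Setoid M := ⟨c, hc.1⟩
  let : L.Structure (Quotient s) :=
    { funMap := fun f a => ⟦funMap f fun i => (a i).out⟧
      RelMap := fun r a => ∃ b, (fun i => ⟦b i⟧) = a ∧ RelMap r b }
  refine ⟨Quotient s, inferInstance,
    ⟨Quotient.mk s, fun f a => ?_, fun r a h => ⟨a, rfl, h⟩⟩,
    Quotient.mk_surjective, fun x y => Quotient.eq⟩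
  exact (Quotient.sound (hc.2 _ f _ _ fun i => Quotient.mk_out (a i))).symm

theorem subdirectlyIrreducible_of_forall {p q : N} (hpq : p ≠ q)
    (h : ∀ d, IsCongruence L N d → d ≠ Eq → d p q) : SubdirectlyIrreducible L N := by
  refine ⟨fun x y => ∀ d, IsCongruence L N d → d ≠ Eq → d x y,
    ⟨⟨fun x d hd _ => hd.1.refl x, fun hxy d hd hne => hd.1.symm (hxy d hd hne),
      fun hxy hyz d hd hne => hd.1.trans (hxy d hd hne) (hyz d hd hne)⟩,
      fun n f a b hab d hd hne => hd.2 n f a b fun i => hab i d hd hne⟩,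
    fun heq => hpq ((congr_fun₂ heq p q).mp h), fun d hd hne x y hxy => hxy d hd hne⟩

/-- Quotient by a congruence `c` maximal among those not relating `x` and `y`: every nontrivial
congruence of the quotient pulls back to one strictly above `c`, so it relates `π x` and `π y`. -/
theorem exists_surjective_hom_subdirectlyIrreducible [Finite M]
    {x y : M} (hxy : x ≠ y) :
    ∃ (N : Type u) (_ : L.Structure N) (π : M →[L] N),
      Function.Surjective π ∧ SubdirectlyIrreducible L N ∧ π x ≠ π y := by
  obtain ⟨c, ⟨hc, hcxy⟩, hcmax⟩ :=
    (Set.toFinite {d : M → M → Prop | IsCongruence L M d ∧ ¬ d x y}).exists_maximal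
      ⟨Eq, isCongruence_eq, hxy⟩
  obtain ⟨N, _, π, hπ, hker⟩ := hc.exists_surjective_hom
  have hπxy : π x ≠ π y := mt (hker x y).1 hcxy
  refine ⟨N, _, π, hπ, subdirectlyIrreducible_of_forall hπxy fun d hd hne => ?_, hπxy⟩
  by_contra hdxy
  have hle : c ≤ fun a b => d (π a) (π b) := fun a b hab => by
    simp only [(hker a b).2 hab]
    exact hd.1.refl _
  have hge := hcmax ⟨hd.comap π, hdxy⟩ hle
  refine hne (funext₂ fun p q => propext ⟨fun hpq => ?_, fun hpq => hpq ▸ hd.1.refl p⟩)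
  obtain ⟨a, rfl⟩ := hπ p
  obtain ⟨b, rfl⟩ := hπ q
  exact (hker a b).2 (hge a b hpq)

end Congruence

theorem realize_eq_of_forall_finite_subdirectlyIrreducible {E : Set (L.Term ℕ × L.Term ℕ)}
    (hgenfin : ∀ t s : L.Term ℕ,
      (∀ (M : Type u) [L.Structure M], Finite M → ModelsEqs L E M →
        ∀ v : ℕ → M, t.realize v = s.realize v) →
      (∀ (M : Type u) [L.Structure M], ModelsEqs L E M →
        ∀ v : ℕ → M, t.realize v = s.realize v))
    {X : Type*} [Countable X] {t s : L.Term X}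
    (h : ∀ (N : Type u) [L.Structure N], Finite N → ModelsEqs L E N →
      SubdirectlyIrreducible L N → ∀ w : X → N, t.realize w = s.realize w)
    {M : Type u} [L.Structure M] [Nonempty M] (hM : ModelsEqs L E M) (w : X → M) :
    t.realize w = s.realize w := by
  obtain ⟨k, hk⟩ := Countable.exists_injective_nat X
  have hfin : ∀ (M' : Type u) [L.Structure M'], Finite M' → ModelsEqs L E M' →
      ∀ v : ℕ → M', (t.relabel k).realize v = (s.relabel k).realize v := by
    intro M' _ _ hM' v
    by_contra hne
    obtain ⟨N, _, π, hπ, hNSI, hπne⟩ := exists_surjective_hom_subdirectlyIrreducible (L := L) hne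
    refine hπne ?_
    rw [← HomClass.realize_term, ← HomClass.realize_term, Term.realize_relabel,
      Term.realize_relabel]
    exact h N (Finite.of_surjective π hπ) (hM'.of_surjective π hπ) hNSI _
  have := hgenfin _ _ hfin M hM (Function.extend k w fun _ => Classical.arbitrary M)
  rwa [Term.realize_relabel, Term.realize_relabel, Function.extend_comp hk] at this

namespace IsFree

variable {E : Set (L.Term ℕ × L.Term ℕ)} {F : Type u} [L.Structure F] {X : Type*} {ι : X → F}

theorem closure_range_eq_top (hF : ModelsEqs L E F) (hfree : IsFree E ι) :
    Substructure.closure L (Set.range ι) = ⊤ := by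
  set S := Substructure.closure L (Set.range ι)
  obtain ⟨g, hg, -⟩ := hfree S (hF.of_injective S.subtype.toHom S.subtype.injective)
    fun x => ⟨ι x, Substructure.subset_closure (Set.mem_range_self x)⟩
  obtain ⟨g₀, -, huniq⟩ := hfree F hF ι
  have hid : S.subtype.toHom.comp g = Hom.id L F :=
    (huniq _ fun x => congrArg Subtype.val (hg x)).trans (huniq _ fun _ => rfl).symm
  refine eq_top_iff.2 fun y _ => ?_
  have hy : ((g y : S) : F) = y := DFunLike.congr_fun hid y
  exact hy ▸ (g y).2

theorem exists_term_realize_eq (hF : ModelsEqs L E F) (hfree : IsFree E ι) (y : F) :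
    ∃ t : L.Term X, t.realize ι = y := by
  obtain ⟨t, rfl⟩ := Substructure.mem_closure_iff_exists_term.1
    ((hfree.closure_range_eq_top hF).symm ▸ Substructure.mem_top y)
  choose x hx using fun s : Set.range ι => s.2
  refine ⟨t.relabel x, ?_⟩
  rw [Term.realize_relabel]
  exact congrArg (t.realize ·) (funext hx)

end IsFree

theorem finite_sigma_functions (hfinfun : ∀ n, Finite (L.Functions n))
    (hfinarity : ∃ N : ℕ, ∀ n, N ≤ n → IsEmpty (L.Functions n)) :
    Finite (Σ n, L.Functions n) := by
  obtain ⟨N, hN⟩ := hfinarity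
  refine Finite.of_surjective (fun f : Σ i : Fin N, L.Functions i => ⟨f.1, f.2⟩) ?_
  rintro ⟨n, f⟩
  exact ⟨⟨⟨n, lt_of_not_ge fun h => (hN n h).elim f⟩, f⟩, rfl⟩

/-- Fix a representative term for each value at `w`; the presentation says that each variable,
and each basic operation applied to representatives, equals the representative of its value. -/
theorem exists_finite_presentation {X : Type*} [Finite X] [Finite (Σ n, L.Functions n)]
    {N : Type*} [L.Structure N] [Finite N] (w : X → N) :
    ∃ Φ : List (L.Term X × L.Term X), (∀ e ∈ Φ, e.1.realize w = e.2.realize w) ∧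
      ∀ {M : Type*} [L.Structure M] (v : X → M), (∀ e ∈ Φ, e.1.realize v = e.2.realize v) →
        ∀ p q : L.Term X, p.realize w = q.realize w → p.realize v = q.realize v := by
  let S := Set.range fun p : L.Term X => p.realize w
  choose U hU using fun s : S => s.2
  let nf : L.Term X → L.Term X := fun p => U ⟨p.realize w, p, rfl⟩
  have hnf : ∀ p q : L.Term X, p.realize w = q.realize w → nf p = nf q := by
    intro p q h
    simp only [nf, h]
  let gens : Set (L.Term X) := Set.range Term.var ∪
    Set.range fun a : Σ f : Σ n, L.Functions n, Fin f.1 → S => Term.func a.1.2 (U ∘ a.2)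
  obtain ⟨Φ₀, hΦ₀⟩ := ((Set.finite_range _).union (Set.finite_range _)).exists_finset_coe
    (s := gens)
  refine ⟨Φ₀.toList.map fun p => (p, nf p), ?_, fun {M} _ v hv => ?_⟩
  · simp only [List.forall_mem_map]
    exact fun p _ => (hU ⟨p.realize w, p, rfl⟩).symm
  have hgens : ∀ p ∈ gens, p.realize v = (nf p).realize v := fun p hp =>
    hv (p, nf p) (List.mem_map_of_mem (Finset.mem_toList.2 (Finset.mem_coe.1 (hΦ₀ ▸ hp))))
  have hnf_realize : ∀ p : L.Term X, p.realize v = (nf p).realize v := by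
    intro p
    induction p with
    | var x => exact hgens _ (Or.inl ⟨x, rfl⟩)
    | func f ts ih =>
      let a : Fin _ → S := fun i => ⟨(ts i).realize w, ts i, rfl⟩
      calc (Term.func f ts).realize v = (Term.func f (U ∘ a)).realize v := by
            simp only [Term.realize_func, ih]; rfl
        _ = (nf (Term.func f (U ∘ a))).realize v := hgens _ (Or.inr ⟨⟨⟨_, f⟩, a⟩, rfl⟩)
        _ = (nf (Term.func f ts)).realize v := by
            rw [hnf _ (Term.func f ts)]
            simp only [Term.realize_func, Function.comp_apply, hU, a]
  intro p q hpq
  rw [hnf_realize p, hnf_realize q, hnf p q hpq]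

def eqsIndicator (fmeet : L.Functions 2) (fbot ftop : L.Functions 0) (σ : L.Term (Fin 4))
    {α : Type*} : List (L.Term α × L.Term α) → L.Term α
  | [] => Constants.term ftop
  | e :: Φ => fmeet.apply₂ (σ.subst ![e.1, e.2, Constants.term ftop, Constants.term fbot])
      (eqsIndicator fmeet fbot ftop σ Φ)

section Indicator

variable {fmeet fjoin : L.Functions 2} {fcompl : L.Functions 1} {fbot ftop : L.Functions 0}
  {σ : L.Term (Fin 4)} {M : Type*} [L.Structure M] [BooleanAlgebra M] {α : Type*}
  {Φ : List (L.Term α × L.Term α)} {v : α → M}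

theorem realize_eqsIndicator_of_forall (h : BoolOpsMatch fmeet fjoin fcompl fbot ftop M)
    (hσ : IsDiscriminator σ M) (hΦ : ∀ e ∈ Φ, e.1.realize v = e.2.realize v) :
    (eqsIndicator fmeet fbot ftop σ Φ).realize v = ⊤ := by
  induction Φ with
  | nil => exact h.realize_top v
  | cons e Φ ih =>
    rw [List.forall_mem_cons] at hΦ
    rw [eqsIndicator, h.realize_meet, ih hΦ.2, inf_top_eq, h.realize_subst_top_bot,
      (hσ _ _ _ _).1 hΦ.1]

theorem realize_eqsIndicator_of_exists_ne (h : BoolOpsMatch fmeet fjoin fcompl fbot ftop M)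
    (hσ : IsDiscriminator σ M) (hΦ : ∃ e ∈ Φ, e.1.realize v ≠ e.2.realize v) :
    (eqsIndicator fmeet fbot ftop σ Φ).realize v = ⊥ := by
  induction Φ with
  | nil => simp at hΦ
  | cons e Φ ih =>
    obtain ⟨e', he', hne⟩ := hΦ
    rw [eqsIndicator, h.realize_meet]
    rcases List.mem_cons.1 he' with rfl | he'
    · rw [h.realize_subst_top_bot, (hσ _ _ _ _).2 hne, bot_inf_eq]
    · rw [ih ⟨e', he', hne⟩, inf_bot_eq]

end Indicator

/-- `d` is the value at the generators of the indicator term of a finite presentation of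
`g ∘ ι`; in every subdirectly irreducible member that indicator is `⊥` or the presentation
holds, so `d ⊓ y = d ⊓ z` is an identity of the variety whenever `g y = g z`. -/
theorem exists_inf_eq_inf_of_map_eq {E : Set (L.Term ℕ × L.Term ℕ)}
    (hgenfin : ∀ t s : L.Term ℕ,
      (∀ (M : Type u) [L.Structure M], Finite M → ModelsEqs L E M →
        ∀ v : ℕ → M, t.realize v = s.realize v) →
      (∀ (M : Type u) [L.Structure M], ModelsEqs L E M →
        ∀ v : ℕ → M, t.realize v = s.realize v))
    {fmeet fjoin : L.Functions 2} {fcompl : L.Functions 1} {fbot ftop : L.Functions 0}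
    (hBA : ∀ (M : Type u) [L.Structure M], ModelsEqs L E M →
      ∃ _inst : BooleanAlgebra M, BoolOpsMatch fmeet fjoin fcompl fbot ftop M)
    {σ : L.Term (Fin 4)} (hσ : ∀ (M : Type u) [L.Structure M], ModelsEqs L E M →
      SubdirectlyIrreducible L M → IsDiscriminator σ M)
    [Finite (Σ n, L.Functions n)]
    {F : Type u} [L.Structure F] [BooleanAlgebra F] (hF : ModelsEqs L E F)
    (hFBA : BoolOpsMatch fmeet fjoin fcompl fbot ftop F)
    {X : Type*} [Finite X] (ι : X → F) (hgen : ∀ y : F, ∃ p : L.Term X, p.realize ι = y)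
    {N : Type u} [L.Structure N] [BooleanAlgebra N] [Finite N]
    (hNBA : BoolOpsMatch fmeet fjoin fcompl fbot ftop N) (hσN : IsDiscriminator σ N)
    (g : F →[L] N) :
    ∃ d : F, g d = ⊤ ∧ ∀ y z, g y = g z → d ⊓ y = d ⊓ z := by
  have : Nonempty F := ⟨⊥⟩
  obtain ⟨Φ, hΦw, hΦ⟩ := exists_finite_presentation (L := L) (⇑g ∘ ι)
  set δ := eqsIndicator fmeet fbot ftop σ Φ
  refine ⟨δ.realize ι, ?_, fun y z hyz => ?_⟩
  · rw [← HomClass.realize_term]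
    exact realize_eqsIndicator_of_forall hNBA hσN hΦw
  obtain ⟨p, rfl⟩ := hgen y
  obtain ⟨q, rfl⟩ := hgen z
  rw [← HomClass.realize_term, ← HomClass.realize_term] at hyz
  have := realize_eq_of_forall_finite_subdirectlyIrreducible hgenfin
    (t := fmeet.apply₂ δ p) (s := fmeet.apply₂ δ q) (fun M _ _ hM hMSI v => ?_) hF ι
  · simpa only [hFBA.realize_meet] using this
  obtain ⟨_, hMBA⟩ := hBA M hM
  simp only [hMBA.realize_meet]
  by_cases hv : ∀ e ∈ Φ, e.1.realize v = e.2.realize v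
  · rw [hΦ v hv p q hyz]
  · push Not at hv
    rw [realize_eqsIndicator_of_exists_ne hMBA (hσ M hM hMSI) hv, bot_inf_eq, bot_inf_eq]

end Language

theorem free_algebra_of_discriminator_variety_atomic_general
    {L : Language} (E : Set (L.Term ℕ × L.Term ℕ))
    -- finite similarity type: no relation symbols, finitely many operation
    -- symbols, each of finite arity
    (hfinfun : ∀ n, Finite (L.Functions n))
    (hfinarity : ∃ N : ℕ, ∀ n, N ≤ n → IsEmpty (L.Functions n))
    -- discriminator variety: there is a switching term for the subdirectly
    -- irreducible members of the variety
    (hdisc : ∃ σ : L.Term (Fin 4),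
      ∀ (M : Type u) [L.Structure M], ModelsEqs L E M →
        SubdirectlyIrreducible L M → ∀ x y a b : M,
          (x = y → σ.realize ![x, y, a, b] = a) ∧
          (x ≠ y → σ.realize ![x, y, a, b] = b))
    -- the variety is generated by its finite members: every equation valid in
    -- all finite members is valid in all members
    (hgenfin : ∀ t s : L.Term ℕ,
      (∀ (M : Type u) [L.Structure M], Finite M → ModelsEqs L E M →
        ∀ v : ℕ → M, t.realize v = s.realize v) →
      (∀ (M : Type u) [L.Structure M], ModelsEqs L E M →
        ∀ v : ℕ → M, t.realize v = s.realize v))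
    -- the variety has a Boolean algebra reduct, via the designated symbols
    (fmeet fjoin : L.Functions 2) (fcompl : L.Functions 1)
    (fbot ftop : L.Functions 0)
    (hBA : ∀ (M : Type u) [L.Structure M], ModelsEqs L E M →
      ∃ _inst : BooleanAlgebra M, BoolOpsMatch fmeet fjoin fcompl fbot ftop M)
    -- `F` is the `V`-free algebra freely generated by the finite set `X`
    {F : Type u} [L.Structure F] (hF : ModelsEqs L E F)
    {X : Type*} [Finite X] (ι : X → F)
    (hfree : ∀ (A : Type u) [L.Structure A], ModelsEqs L E A →
      ∀ f : X → A, ∃! g : F →[L] A, ∀ x : X, g (ι x) = f x)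
    -- the Boolean algebra structure of `F` given by the reduct
    [BooleanAlgebra F] (hFBA : BoolOpsMatch fmeet fjoin fcompl fbot ftop F) :
    -- conclusion: `F` is atomic as a Boolean algebra
    ∀ b : F, b ≠ ⊥ → ∃ a : F, IsAtom a ∧ a ≤ b := by
  obtain ⟨σ, hσ⟩ := hdisc
  have := finite_sigma_functions hfinfun hfinarity
  have : Nonempty F := ⟨⊥⟩
  have hgen := IsFree.exists_term_realize_eq hF hfree
  intro b hb
  obtain ⟨t, rfl⟩ := hgen b
  obtain ⟨N, _, hNfin, hN, hNSI, w, htw⟩ : ∃ (N : Type u) (_ : L.Structure N), Finite N ∧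
      ModelsEqs L E N ∧ SubdirectlyIrreducible L N ∧
      ∃ w : X → N, t.realize w ≠ (Constants.term fbot : L.Term X).realize w := by
    by_contra! h
    refine hb ?_
    rw [realize_eq_of_forall_finite_subdirectlyIrreducible hgenfin h hF ι, hFBA.realize_bot]
  obtain ⟨_, hNBA⟩ := hBA N hN
  obtain ⟨g, hg, -⟩ := hfree N hN w
  have hgι : ⇑g ∘ ι = w := funext hg
  obtain ⟨d, hd, hdg⟩ := exists_inf_eq_inf_of_map_eq hgenfin hBA hσ hF hFBA ι hgen hNBA
    (hσ N hN hNSI) g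
  refine exists_isAtom_le_of_map_ne_bot (hFBA.map_inf hNBA g) (hFBA.map_bot hNBA g)
    (Set.toFinite _) hd hdg ?_
  rwa [← HomClass.realize_term, hgι, ← hNBA.realize_bot w]

/-- A finitely generated free algebra of a discriminator variety of finite
similarity type with a Boolean algebra reduct which is generated by its
finite members is atomic as a Boolean algebra. -/
theorem free_algebra_of_discriminator_variety_atomic
    {L : Language} (E : Set (L.Term ℕ × L.Term ℕ))
    -- finite similarity type: no relation symbols, finitely many operation
    -- symbols, each of finite arity
    (hnorel : ∀ n, IsEmpty (L.Relations n))
    (hfinfun : ∀ n, Finite (L.Functions n))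
    (hfinarity : ∃ N : ℕ, ∀ n, N ≤ n → IsEmpty (L.Functions n))
    -- discriminator variety: there is a switching term for the subdirectly
    -- irreducible members of the variety
    (hdisc : ∃ σ : L.Term (Fin 4),
      ∀ (M : Type u) [L.Structure M], ModelsEqs L E M →
        SubdirectlyIrreducible L M → ∀ x y a b : M,
          (x = y → σ.realize ![x, y, a, b] = a) ∧
          (x ≠ y → σ.realize ![x, y, a, b] = b))
    -- the variety is generated by its finite members: every equation valid in
    -- all finite members is valid in all members
    (hgenfin : ∀ t s : L.Term ℕ,
      (∀ (M : Type u) [L.Structure M], Finite M → ModelsEqs L E M →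
        ∀ v : ℕ → M, t.realize v = s.realize v) →
      (∀ (M : Type u) [L.Structure M], ModelsEqs L E M →
        ∀ v : ℕ → M, t.realize v = s.realize v))
    -- the variety has a Boolean algebra reduct, via the designated symbols
    (fmeet fjoin : L.Functions 2) (fcompl : L.Functions 1)
    (fbot ftop : L.Functions 0)
    (hBA : ∀ (M : Type u) [L.Structure M], ModelsEqs L E M →
      ∃ _inst : BooleanAlgebra M, BoolOpsMatch fmeet fjoin fcompl fbot ftop M)
    -- `F` is the `V`-free algebra freely generated by the finite set `X`
    {F : Type u} [L.Structure F] (hF : ModelsEqs L E F)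
    {X : Type*} [Finite X] (ι : X → F)
    (hfree : ∀ (A : Type u) [L.Structure A], ModelsEqs L E A →
      ∀ f : X → A, ∃! g : F →[L] A, ∀ x : X, g (ι x) = f x)
    -- the Boolean algebra structure of `F` given by the reduct
    [BooleanAlgebra F] (hFBA : BoolOpsMatch fmeet fjoin fcompl fbot ftop F) :
    -- conclusion: `F` is atomic as a Boolean algebra
    ∀ b : F, b ≠ ⊥ → ∃ a : F, IsAtom a ∧ a ≤ b :=
  free_algebra_of_discriminator_variety_atomic_general E hfinfun hfinarity hdisc hgenfin fmeet fjoin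
    fcompl fbot ftop hBA hF ι hfree hFBA
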